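/- In the ring of formal power series over \mathbb{Z}[t], the generating function D_2(x,t) = \sum_{n \geq 0} d_2(n,t) x^n of the Hankel determinants d_2(n,t) = \det( M_{2+i+j}(t) )_{i,j=0}^{n-1} (with d_2(0,t) = 1) satisfies (1-x)^2 (1 - (t^2-2)x + x^2) \cdot D_2(x,t) = 1 + x. -/

import Mathlib

/-!
Write `B_m = (M_{i+1,k}(t))_{i,k<m}`. The recurrence defining `M_{n,k}` says `B_m = L_m J_m`, where
`L_m = (M_{i,k})` is lower unitriangular and `J_m` is tridiagonal with `t` on the diagonal and `1`
next to it; hence `det B_m = S_m(t)`, the Chebyshev polynomial with `S_{m+2} = t S_{m+1} - S_m`.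
Splitting a Motzkin path of length `i + j + 2` at time `i + 1` gives
`M_{i+j+2} = ∑_k M_{i+1,k} M_{j+1,k}`, so the Hankel matrix of size `n + 1` is `B_{n+1} B_{n+1}ᵀ`
plus the missing term `M_{n+1,n+1}^2 = 1` in its bottom-right corner. Expanding the determinant
along the last row gives `d_2(n+1) = d_2(n) + S_{n+1}^2`. Finally, `S_n^2 - S_{n-1}^2` satisfies the
linear recurrence with characteristic polynomial `1 - (t^2-2)x + x^2`, and the two factors `1 - x`
undo the two summations.
-/

open Polynomial

/-- The weight polynomials `M_{n,k}(t)` of Motzkin paths from `(0,0)` to `(n,k)`. -/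
noncomputable def motzkinPoly : ℕ → ℤ → Polynomial ℤ
  | 0, k => if k = 0 then 1 else 0
  | n + 1, k =>
      if k < 0 then 0 else
        motzkinPoly n (k - 1) + X * motzkinPoly n k + motzkinPoly n (k + 1)
  termination_by n _ => n

open Matrix

theorem motzkinPoly_of_neg (n : ℕ) {k : ℤ} (hk : k < 0) : motzkinPoly n k = 0 := by
  cases n <;> simp [motzkinPoly, hk, hk.ne]

theorem motzkinPoly_succ (n : ℕ) {k : ℤ} (hk : 0 ≤ k) :
    motzkinPoly (n + 1) k =
      motzkinPoly n (k - 1) + X * motzkinPoly n k + motzkinPoly n (k + 1) := by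
  rw [motzkinPoly, if_neg hk.not_gt]

theorem motzkinPoly_of_lt {n : ℕ} {k : ℤ} (hk : n < k) : motzkinPoly n k = 0 := by
  induction n generalizing k with
  | zero =>
    rw [Nat.cast_zero] at hk
    simp [motzkinPoly, hk.ne']
  | succ n ih =>
    rw [motzkinPoly_succ n (by omega), ih (by omega), ih (by omega), ih (by omega)]
    ring

theorem motzkinPoly_self (n : ℕ) : motzkinPoly n n = 1 := by
  induction n with
  | zero => simp [motzkinPoly]
  | succ n ih =>
    rw [Nat.cast_succ, motzkinPoly_succ n (by positivity), add_sub_cancel_right, ih,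
      motzkinPoly_of_lt (by omega), motzkinPoly_of_lt (by omega)]
    ring

theorem sum_range_mul_shift {R : Type*} [NonUnitalNonAssocSemiring R] (f g : ℤ → R) (N : ℕ)
    (hf : f (-1) = 0) (hfg : f N * g (N + 1) = 0) :
    ∑ k ∈ Finset.range (N + 1), f (k - 1) * g k = ∑ k ∈ Finset.range (N + 1), f k * g (k + 1) := by
  rw [Finset.sum_range_succ', Finset.sum_range_succ]
  push_cast
  simp [hf, hfg]

theorem sum_motzkinPoly_succ_mul {a b N : ℕ} (hb : b + 1 < N) :
    ∑ k ∈ Finset.range N, motzkinPoly (a + 1) k * motzkinPoly b k =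
      ∑ k ∈ Finset.range N, motzkinPoly a k * motzkinPoly (b + 1) k := by
  obtain ⟨N, rfl⟩ : ∃ N', N = N' + 1 := ⟨N - 1, by omega⟩
  have down := sum_range_mul_shift (motzkinPoly a) (motzkinPoly b) N
    (motzkinPoly_of_neg a (by norm_num)) (by rw [motzkinPoly_of_lt (n := b) (by omega), mul_zero])
  have up := sum_range_mul_shift (motzkinPoly b) (motzkinPoly a) N
    (motzkinPoly_of_neg b (by norm_num)) (by rw [motzkinPoly_of_lt (n := b) (by omega), zero_mul])
  simp only [mul_comm (motzkinPoly b _)] at up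
  simp only [motzkinPoly_succ _ (Nat.cast_nonneg _), add_mul, mul_add, Finset.sum_add_distrib]
  rw [down, ← up]
  simp only [mul_assoc, mul_left_comm (motzkinPoly a _) X]
  abel

theorem sum_motzkinPoly_mul_motzkinPoly (a : ℕ) {b N : ℕ} (hb : b < N) :
    ∑ k ∈ Finset.range N, motzkinPoly a k * motzkinPoly b k = motzkinPoly (a + b) 0 := by
  induction b generalizing a with
  | zero =>
    rw [Finset.sum_eq_single_of_mem 0 (Finset.mem_range.mpr hb)]
    · simp [motzkinPoly]
    · intro k _ hk
      rw [motzkinPoly_of_lt (n := 0) (by omega), mul_zero]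
  | succ b ih =>
    rw [← sum_motzkinPoly_succ_mul hb, ih (a + 1) (by omega), add_right_comm, add_assoc]

section Jacobi

variable (R : Type*) [CommRing R]

noncomputable def jacobiMatrix (m : ℕ) : Matrix (Fin m) (Fin m) R[X] :=
  of fun j k => if (j : ℕ) = k then X else if (j : ℕ) = k + 1 ∨ (k : ℕ) = j + 1 then 1 else 0

theorem jacobiMatrix_submatrix_succ (m : ℕ) :
    (jacobiMatrix R (m + 1)).submatrix Fin.succ Fin.succ = jacobiMatrix R m := by
  ext j k
  simp [jacobiMatrix]

theorem det_jacobiMatrix_add_two (m : ℕ) :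
    (jacobiMatrix R (m + 2)).det = X * (jacobiMatrix R (m + 1)).det - (jacobiMatrix R m).det := by
  have minor : ((jacobiMatrix R (m + 2)).submatrix Fin.succ (Fin.succAbove 1)).det =
      (jacobiMatrix R m).det := by
    rw [det_succ_column_zero, Fin.sum_univ_succ]
    simp [jacobiMatrix]
    congr 1
    ext j k
    simp
  have first_row (k : Fin m) : jacobiMatrix R (m + 2) 0 k.succ.succ = 0 := by simp [jacobiMatrix]
  rw [det_succ_row_zero, Fin.sum_univ_succ, Fin.sum_univ_succ]
  simp [Fin.succ_zero_eq_one, minor, jacobiMatrix_submatrix_succ, first_row]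
  simp [jacobiMatrix]
  ring

theorem det_jacobiMatrix (m : ℕ) : (jacobiMatrix R m).det = Chebyshev.S R m := by
  induction m using Nat.twoStepInduction with
  | zero => simp
  | one => simp [jacobiMatrix]
  | more m ih₀ ih₁ =>
    rw [det_jacobiMatrix_add_two, ih₀, ih₁]
    push_cast
    rw [Chebyshev.S_add_two]

end Jacobi

noncomputable def motzkinMatrix (m : ℕ) : Matrix (Fin m) (Fin m) ℤ[X] :=
  of fun i k => motzkinPoly i k

noncomputable def motzkinShiftMatrix (m : ℕ) : Matrix (Fin m) (Fin m) ℤ[X] :=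
  of fun i k => motzkinPoly (i + 1) k

theorem det_motzkinMatrix (m : ℕ) : (motzkinMatrix m).det = 1 := by
  have lower : (motzkinMatrix m).IsLowerTriangular := fun i k hik =>
    motzkinPoly_of_lt (Nat.cast_lt.mpr hik)
  rw [det_of_isLowerTriangular _ lower]
  exact Finset.prod_eq_one fun i _ => motzkinPoly_self i

theorem motzkinShiftMatrix_eq_mul (m : ℕ) :
    motzkinShiftMatrix m = motzkinMatrix m * jacobiMatrix ℤ m := by
  refine Matrix.ext fun i k => ?_
  have split (j : Fin m) : motzkinMatrix m i j * jacobiMatrix ℤ m j k =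
      (if j = k then motzkinPoly i j * X else 0) +
        (if (j : ℕ) = k + 1 then motzkinPoly i j else 0) +
        (if (k : ℕ) = j + 1 then motzkinPoly i j else 0) := by
    simp only [motzkinMatrix, jacobiMatrix, of_apply, Fin.ext_iff]
    split_ifs <;> first | (exfalso; omega) | ring
  simp only [mul_apply, split, Finset.sum_add_distrib, Finset.sum_ite_eq', Finset.mem_univ, if_true]
  rw [Fin.sum_univ_eq_sum_range (fun j => if j = k + 1 then motzkinPoly i j else 0),
    Fin.sum_univ_eq_sum_range (fun j => if k = j + 1 then motzkinPoly i j else 0)]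
  have up : ∑ j ∈ Finset.range m, (if j = k + 1 then motzkinPoly i j else 0) =
      motzkinPoly i ((k : ℕ) + 1 : ℕ) := by
    rw [Finset.sum_ite_eq', ite_eq_left_iff, Finset.mem_range]
    exact fun hk => (motzkinPoly_of_lt (by omega)).symm
  have down : ∑ j ∈ Finset.range m, (if k = j + 1 then motzkinPoly i j else 0) =
      motzkinPoly i ((k : ℕ) - 1 : ℤ) := by
    obtain ⟨_ | k, hk⟩ := k
    · simp [motzkinPoly_of_neg]
    · simp [Finset.sum_ite_eq, show k < m by omega]
  rw [up, down, motzkinShiftMatrix, of_apply, motzkinPoly_succ _ (Nat.cast_nonneg _)]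
  push_cast
  ring

theorem Matrix.det_add_single_last_last {R : Type*} [CommRing R] {m : ℕ}
    (A : Matrix (Fin (m + 1)) (Fin (m + 1)) R) :
    (A + single (Fin.last m) (Fin.last m) 1).det =
      A.det + (A.submatrix Fin.castSucc Fin.castSucc).det := by
  have row : A + single (Fin.last m) (Fin.last m) 1 =
      A.updateRow (Fin.last m) (A (Fin.last m) + Pi.single (Fin.last m) 1) := by
    ext i j
    by_cases hi : i = Fin.last m
    · subst hi
      simp [single_apply, Pi.single_apply, eq_comm]
    · simp [hi, Ne.symm hi]
  rw [row, det_updateRow_add, updateRow_eq_self, ← adjugate_apply,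
    adjugate_fin_succ_eq_det_submatrix, Fin.succAbove_last, Even.neg_one_pow ⟨m, by simp⟩,
    one_mul]

noncomputable def motzkinHankel (n : ℕ) : Matrix (Fin n) (Fin n) ℤ[X] :=
  of fun i j => motzkinPoly (2 + i + j) 0

theorem motzkinShiftMatrix_mul_transpose_apply (m : ℕ) (i j : Fin m) :
    (motzkinShiftMatrix m * (motzkinShiftMatrix m)ᵀ) i j =
      ∑ k ∈ Finset.range m, motzkinPoly (i + 1) k * motzkinPoly (j + 1) k := by
  simp [mul_apply, motzkinShiftMatrix,
    Fin.sum_univ_eq_sum_range (fun k => motzkinPoly (i + 1) k * motzkinPoly (j + 1) k)]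

theorem motzkinPoly_succ_last {n : ℕ} (i : Fin (n + 1)) :
    motzkinPoly (i + 1) (n + 1 : ℕ) = if Fin.last n = i then 1 else 0 := by
  split_ifs with hi
  · subst hi
    exact_mod_cast motzkinPoly_self (n + 1)
  · exact motzkinPoly_of_lt (by have := Fin.val_lt_last (Ne.symm hi); omega)

theorem motzkinHankel_succ (n : ℕ) :
    motzkinHankel (n + 1) = motzkinShiftMatrix (n + 1) * (motzkinShiftMatrix (n + 1))ᵀ +
      single (Fin.last n) (Fin.last n) 1 := by
  refine Matrix.ext fun i j => ?_
  have := sum_motzkinPoly_mul_motzkinPoly (i + 1) (b := j + 1) (N := n + 2) (by omega)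
  rw [Finset.sum_range_succ, motzkinPoly_succ_last, motzkinPoly_succ_last, ite_zero_mul_ite_zero,
    mul_one] at this
  rw [Matrix.add_apply, motzkinShiftMatrix_mul_transpose_apply, single_apply, motzkinHankel,
    of_apply, this]
  congr 1
  omega

theorem motzkinShiftMatrix_mul_transpose_submatrix (n : ℕ) :
    (motzkinShiftMatrix (n + 1) * (motzkinShiftMatrix (n + 1))ᵀ).submatrix Fin.castSucc
      Fin.castSucc = motzkinHankel n := by
  refine Matrix.ext fun i j => ?_
  rw [submatrix_apply, motzkinShiftMatrix_mul_transpose_apply,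
    sum_motzkinPoly_mul_motzkinPoly _ (by simp), motzkinHankel, of_apply]
  congr 1
  simp
  omega

theorem det_motzkinHankel_succ (n : ℕ) :
    (motzkinHankel (n + 1)).det = (motzkinHankel n).det + Chebyshev.S ℤ (n + 1) ^ 2 := by
  rw [motzkinHankel_succ, det_add_single_last_last, motzkinShiftMatrix_mul_transpose_submatrix,
    det_mul, det_transpose, motzkinShiftMatrix_eq_mul, det_mul, det_motzkinMatrix,
    det_jacobiMatrix]
  push_cast
  ring

theorem PowerSeries.one_sub_X_mul_mk {R : Type*} [Ring R] {a b : ℕ → R} (h₀ : b 0 = a 0)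
    (h : ∀ n, b (n + 1) = a (n + 1) - a n) :
    (1 - PowerSeries.X) * PowerSeries.mk a = PowerSeries.mk b := by
  ext (_ | n) <;> simp [sub_mul, PowerSeries.coeff_succ_X_mul, h₀, h]

theorem PowerSeries.mul_mk_of_recurrence {R : Type*} [Ring R] (c : R) {a : ℕ → R}
    (h : ∀ n, a (n + 2) = c * a (n + 1) - a n) :
    (1 - PowerSeries.C c * PowerSeries.X + PowerSeries.X ^ 2) * PowerSeries.mk a =
      PowerSeries.C (a 0) + PowerSeries.C (a 1 - c * a 0) * PowerSeries.X := by
  ext (_ | _ | n) <;>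
    simp [add_mul, sub_mul, mul_assoc, PowerSeries.coeff_succ_X_mul, PowerSeries.coeff_X_pow_mul',
      h]

theorem Polynomial.Chebyshev.S_sq_sub_S_sq_add_two {R : Type*} [CommRing R] (n : ℤ) :
    S R (n + 2) ^ 2 - S R (n + 1) ^ 2 =
      (X ^ 2 - 2) * (S R (n + 1) ^ 2 - S R n ^ 2) - (S R n ^ 2 - S R (n - 1) ^ 2) := by
  rw [S_add_two, S_sub_one]
  ring

/-- The generating function of `d_2(n,t) = det(M_{2+i+j}(t))` satisfies
`(1-x)^2 (1-(t^2-2)x+x^2) · D_2(x,t) = 1 + x` in `(ℤ[t])[[x]]`. -/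
theorem genfun_hankel_det_shift_two :
    ((1 - PowerSeries.X) ^ 2 *
        (1 - PowerSeries.C (X ^ 2 - 2 : Polynomial ℤ) * PowerSeries.X +
          PowerSeries.X ^ 2)) *
      PowerSeries.mk (fun n =>
        Matrix.det (Matrix.of fun i j : Fin n => motzkinPoly (2 + (i : ℕ) + (j : ℕ)) 0)) =
      1 + PowerSeries.X := by
  change _ * PowerSeries.mk (fun n => (motzkinHankel n).det) = _
  have hankel : (1 - PowerSeries.X) * PowerSeries.mk (fun n => (motzkinHankel n).det) =
      PowerSeries.mk fun n : ℕ => Chebyshev.S ℤ n ^ 2 :=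
    PowerSeries.one_sub_X_mul_mk (by simp [motzkinHankel]) fun n => by
      rw [det_motzkinHankel_succ, Nat.cast_succ]
      ring
  have squares : (1 - PowerSeries.X) * PowerSeries.mk (fun n : ℕ => Chebyshev.S ℤ n ^ 2) =
      PowerSeries.mk fun n : ℕ => Chebyshev.S ℤ n ^ 2 - Chebyshev.S ℤ (n - 1) ^ 2 :=
    PowerSeries.one_sub_X_mul_mk (by simp) fun n => by simp
  have differences :
      (1 - PowerSeries.C (X ^ 2 - 2 : ℤ[X]) * PowerSeries.X + PowerSeries.X ^ 2) *
        PowerSeries.mk (fun n : ℕ => Chebyshev.S ℤ n ^ 2 - Chebyshev.S ℤ (n - 1) ^ 2) =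
        1 + PowerSeries.X := by
    rw [PowerSeries.mul_mk_of_recurrence (X ^ 2 - 2) fun n => by
      push_cast
      rw [add_sub_cancel_right, show (n : ℤ) + 2 - 1 = n + 1 by ring]
      exact Chebyshev.S_sq_sub_S_sq_add_two n]
    norm_num
  rw [← differences, ← squares, ← hankel]
  ring
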